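/- arXiv:0904.2323 — 5 statements merged into one kernel-verified Lean document; each statement's English description precedes it below -/
import Mathlib

section
/- For all natural numbers n ≥ 0, the nested sum ∑_{r=1}^n (1/r)·(∑_{l=1}^r (H_l² + H_l^{(2)})/l + ∑_{l=1}^r H_l/l) equals (1/12)·(H_n⁴ + 2H_n³ + 6(H_n+1)H_n^{(2)}H_n + 3(H_n^{(2)})² + (8H_n+4)H_n^{(3)} + 6H_n^{(4)}). -/
/-- The `n`-th harmonic number `H_n = ∑_{k=1}^n 1/k` in `ℚ`. -/
def H (n : ℕ) : ℚ := ∑ k ∈ Finset.Icc 1 n, (1 : ℚ) / k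

/-- The generalized harmonic number of order `o`, `H_n^{(o)} = ∑_{k=1}^n 1/k^o` in `ℚ`. -/
def Hgen (o n : ℕ) : ℚ := ∑ k ∈ Finset.Icc 1 n, (1 : ℚ) / (k : ℚ) ^ o

lemma H_succ (n : ℕ) : H (n + 1) = H n + 1 / (n + 1 : ℚ) := by
  unfold H
  rw [Finset.sum_Icc_succ_top (by omega)]
  push_cast; ring

lemma Hgen_succ (o n : ℕ) : Hgen o (n + 1) = Hgen o n + 1 / ((n : ℚ) + 1) ^ o := by
  unfold Hgen
  rw [Finset.sum_Icc_succ_top (by omega)]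
  push_cast; ring

lemma aux1 (r : ℕ) : ∑ l ∈ Finset.Icc 1 r, H l / (l : ℚ)
    = ((H r) ^ 2 + Hgen 2 r) / 2 := by
  induction r with
  | zero => simp [H, Hgen]
  | succ n ih =>
    rw [Finset.sum_Icc_succ_top (by omega), ih, H_succ, Hgen_succ]
    have h : ((n : ℚ) + 1) ≠ 0 := by positivity
    push_cast
    field_simp
    ring

lemma aux2 (r : ℕ) : ∑ l ∈ Finset.Icc 1 r, ((H l) ^ 2 + Hgen 2 l) / (l : ℚ)
    = ((H r) ^ 3 + 3 * H r * Hgen 2 r + 2 * Hgen 3 r) / 3 := by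
  induction r with
  | zero => simp [H, Hgen]
  | succ n ih =>
    rw [Finset.sum_Icc_succ_top (by omega), ih, H_succ, Hgen_succ, Hgen_succ]
    have h : ((n : ℚ) + 1) ≠ 0 := by positivity
    push_cast
    field_simp
    ring

theorem stmt0 (n : ℕ) :
    ∑ r ∈ Finset.Icc 1 n, (1 / (r : ℚ)) *
      ((∑ l ∈ Finset.Icc 1 r, ((H l) ^ 2 + Hgen 2 l) / (l : ℚ)) +
        ∑ l ∈ Finset.Icc 1 r, H l / (l : ℚ))
    = (1 / 12) * ((H n) ^ 4 + 2 * (H n) ^ 3 + 6 * (H n + 1) * Hgen 2 n * H n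
        + 3 * (Hgen 2 n) ^ 2 + (8 * H n + 4) * Hgen 3 n + 6 * Hgen 4 n) := by
  induction n with
  | zero => simp [H, Hgen]
  | succ n ih =>
    rw [Finset.sum_Icc_succ_top (by omega), ih, aux1, aux2, H_succ,
      Hgen_succ 2, Hgen_succ 3, Hgen_succ 4]
    have h : ((n : ℚ) + 1) ≠ 0 := by positivity
    push_cast
    field_simp
    ring
end

section
/- For all natural numbers n ≥ 0, ∑_{i=1}^n H_i/i = (1/2)·(H_n² + H_n^{(2)}). -/
open Finset

/-- With `S_i = a_1 + ⋯ + a_i`: `S_n²` is the diagonal `∑ a_i²` plus twice the strictly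
lower-triangular sum `∑_{j<i} a_i a_j`, while `∑ a_i S_i` is the lower triangle with its diagonal. -/
theorem two_mul_sum_mul_partialSum {R : Type*} [CommRing R] (a : ℕ → R) (n : ℕ) :
    2 * ∑ i ∈ Icc 1 n, a i * ∑ j ∈ Icc 1 i, a j =
      (∑ i ∈ Icc 1 n, a i) ^ 2 + ∑ i ∈ Icc 1 n, a i ^ 2 := by
  induction n with
  | zero => simp
  | succ n ih =>
    simp only [sum_Icc_succ_top (Nat.le_add_left 1 n)]
    linear_combination ih

theorem H_eq_sum_inv (n : ℕ) : H n = ∑ k ∈ Icc 1 n, ((k : ℚ))⁻¹ := by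
  simp only [H, one_div]

theorem Hgen_two_eq_sum_inv_sq (n : ℕ) : Hgen 2 n = ∑ k ∈ Icc 1 n, ((k : ℚ))⁻¹ ^ 2 := by
  simp only [Hgen, one_div, inv_pow]

theorem stmt1 (n : ℕ) :
    ∑ i ∈ Finset.Icc 1 n, H i / (i : ℚ) = (1 / 2) * ((H n) ^ 2 + Hgen 2 n) := by
  have summand (i : ℕ) : H i / i = (i : ℚ)⁻¹ * ∑ j ∈ Icc 1 i, ((j : ℚ))⁻¹ := by
    rw [H_eq_sum_inv, div_eq_mul_inv, mul_comm]
  rw [sum_congr rfl fun i _ => summand i, H_eq_sum_inv, Hgen_two_eq_sum_inv_sq,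
    ← two_mul_sum_mul_partialSum]
  ring
end

section
/- For all natural numbers n ≥ 0, ∑_{i=1}^n (H_i² + H_i^{(2)})/i = (1/3)·(H_n³ + 3 H_n^{(2)} H_n + 2 H_n^{(3)}). -/
theorem stmt2 (n : ℕ) :
    ∑ i ∈ Finset.Icc 1 n, ((H i) ^ 2 + Hgen 2 i) / (i : ℚ)
      = (1 / 3) * ((H n) ^ 3 + 3 * Hgen 2 n * H n + 2 * Hgen 3 n) := by
  induction n with
  | zero => simp [H, Hgen]
  | succ n ih =>
    rw [Finset.sum_Icc_succ_top (Nat.le_add_left 1 n), ih, H_succ, Hgen_succ, Hgen_succ]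
    have h1 : ((n : ℚ) + 1) ≠ 0 := by positivity
    push_cast
    field_simp
    ring
end

section
/- For all natural numbers n ≥ 1, ∑_{i=1}^n (4i−3)/(i(2i−1)) = 2(2H_n − H_{2n}). -/
theorem stmt4 (n : ℕ) (hn : 1 ≤ n) :
    ∑ i ∈ Finset.Icc 1 n, (4 * (i : ℚ) - 3) / ((i : ℚ) * (2 * (i : ℚ) - 1))
      = 2 * (2 * H n - H (2 * n)) := by
  induction n with
  | zero => omega
  | succ n ih =>
    rcases Nat.eq_zero_or_pos n with h | h
    · subst h
      simp [H, Finset.sum_Icc_succ_top]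
      norm_num
    · have hIH := ih h
      have hH1 : H (n + 1) = H n + 1 / (n + 1 : ℚ) := by
        rw [H, H, Finset.sum_Icc_succ_top (by omega)]
        push_cast
        ring
      have hH2 : H (2 * (n + 1)) = H (2 * n) + 1 / (2 * n + 1 : ℚ) + 1 / (2 * n + 2 : ℚ) := by
        have e : 2 * (n + 1) = (2 * n + 1) + 1 := by ring
        rw [e, H, H, Finset.sum_Icc_succ_top (by omega), Finset.sum_Icc_succ_top (by omega)]
        push_cast
        ring
      rw [Finset.sum_Icc_succ_top (by omega), hIH, hH1, hH2]
      have h1 : ((n : ℚ) + 1) ≠ 0 := by positivity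
      have h2 : (2 * (n : ℚ) + 1) ≠ 0 := by positivity
      have h3 : (2 * (n : ℚ) + 2) ≠ 0 := by positivity
      have h4 : (1 + (n : ℚ) * 3 + (n : ℚ) ^ 2 * 2) ≠ 0 := by positivity
      have hterm : (4 * ((n : ℚ) + 1) - 3) / (((n : ℚ) + 1) * (2 * ((n : ℚ) + 1) - 1))
          = 3 / ((n : ℚ) + 1) - 2 / (2 * (n : ℚ) + 1) := by
        have h5 : (2 * (n : ℚ) + 1) ≠ 0 := by positivity
        have h6 : (((n : ℚ) + 1) * (2 * ((n : ℚ) + 1) - 1)) ≠ 0 := by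
          have e : (2 * ((n : ℚ) + 1) - 1) = 2 * (n : ℚ) + 1 := by ring
          rw [e]; exact mul_ne_zero h1 h5
        rw [div_sub_div _ _ h1 h5, div_eq_div_iff h6 (mul_ne_zero h1 h5)]
        ring
      push_cast
      rw [hterm]
      field_simp
      ring
end

section
/- Let K be a field of characteristic zero and let τ : K(x)[h] → S(K) be a ring homomorphism commuting with the shift, where σ(x) = x+1, σ(h) = h + 1/(x+1), h transcendental over K(x), τ restricted to K(x) is the evaluation embedding and τ(h) = ⟨H_k⟩ is the germ of harmonic numbers. Then τ is injective. -/
open Filter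

/-- The ring of sequences `S(K)`: germs at infinity of sequences `ℕ → K`. -/
abbrev SeqRing (K : Type) [Field K] : Type := (Filter.atTop : Filter ℕ).Germ K

/-- The harmonic numbers `H_k = ∑_{i=1}^k 1/i` in `K`. -/
noncomputable def Hnum (K : Type) [Field K] [CharZero K] (k : ℕ) : K :=
  ∑ i ∈ Finset.Icc 1 k, (1 : K) / (i : K)

/-!
Clearing denominators, a nonzero element of `ker τ` yields a nonzero `g ∈ K[x][y]` with
`g(k, H_k) = 0` for all large `k`. All the numbers `k^j H_k^i` are rational, so applying a
suitable `ℚ`-linear functional `K → ℝ` to the coefficients of `g` produces such a relation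
over `ℝ`. There it is impossible: `H_k → ∞` while `H_k^n = o(k)` for every `n`, so if `d` is
the degree of `g` in `x` and `c(y)` its coefficient of `x^d`, then `c(H_k) k^d` dominates every
other term of `g(k, H_k)`.
-/

open Polynomial Asymptotics Real
open scoped Polynomial.Bivariate

namespace Polynomial

variable {R A B : Type*} [CommSemiring R] [CommSemiring A] [CommSemiring B] [Algebra R A]
  [Algebra R B]

noncomputable def mapLinear (ℓ : A →ₗ[R] B) : A[X] →ₗ[R] B[X] :=
  lsum fun n => (monomial n).restrictScalars R ∘ₗ ℓ

lemma mapLinear_apply (ℓ : A →ₗ[R] B) (p : A[X]) :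
    mapLinear ℓ p = p.sum fun n a => monomial n (ℓ a) := rfl

@[simp] lemma coeff_mapLinear (ℓ : A →ₗ[R] B) (p : A[X]) (n : ℕ) :
    (mapLinear ℓ p).coeff n = ℓ (p.coeff n) := by
  rw [mapLinear_apply, sum_def, finsetSum_coeff]
  simp only [coeff_monomial]
  rw [Finset.sum_ite_eq']
  split_ifs with h
  · rfl
  · rw [notMem_support_iff.mp h, map_zero]

lemma eval_mapLinear (ℓ : A →ₗ[R] B) (p : A[X]) (x : R) :
    (mapLinear ℓ p).eval (algebraMap R B x) = ℓ (p.eval (algebraMap R A x)) := by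
  rw [mapLinear_apply, sum_def, eval_finsetSum, eval_eq_sum, sum_def, map_sum]
  refine Finset.sum_congr rfl fun n _ => ?_
  rw [eval_monomial, ← map_pow, ← map_pow, mul_comm, ← Algebra.smul_def, mul_comm,
    ← Algebra.smul_def, map_smul]

lemma evalEval_mapLinear_mapLinear (ℓ : A →ₗ[R] B) (g : A[X][Y]) (x y : R) :
    (mapLinear (mapLinear ℓ) g).evalEval (algebraMap R B x) (algebraMap R B y) =
      ℓ (g.evalEval (algebraMap R A x) (algebraMap R A y)) := by
  rw [evalEval, evalEval, ← algebraMap_apply, ← algebraMap_apply, eval_mapLinear,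
    eval_mapLinear]

lemma exists_mapLinear_mapLinear_ne_zero {K : Type*} [CommRing K] [Algebra ℚ K] {g : K[X][Y]}
    (hg : g ≠ 0) : ∃ ℓ : K →ₗ[ℚ] ℝ, mapLinear (mapLinear ℓ) g ≠ 0 := by
  have hc : g.leadingCoeff.leadingCoeff ≠ 0 :=
    leadingCoeff_ne_zero.mpr (leadingCoeff_ne_zero.mpr hg)
  obtain ⟨φ, hφ⟩ := Module.Projective.exists_dual_ne_zero ℚ hc
  refine ⟨Algebra.linearMap ℚ ℝ ∘ₗ φ, fun h => hφ ?_⟩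
  simpa using congrArg (fun p => (p.coeff g.natDegree).coeff g.leadingCoeff.natDegree) h

end Polynomial

lemma tendsto_harmonic_atTop : Tendsto (fun k : ℕ => (harmonic k : ℝ)) atTop atTop := by
  refine tendsto_atTop_mono log_add_one_le_harmonic ?_
  exact tendsto_log_atTop.comp (tendsto_natCast_atTop_atTop.comp (tendsto_add_atTop_nat 1))

lemma isLittleO_harmonic_pow (n : ℕ) :
    (fun k : ℕ => (harmonic k : ℝ) ^ n) =o[atTop] (fun k : ℕ => (k : ℝ)) := by
  have hlog : (fun x : ℝ => (1 + log x) ^ n) =o[atTop] id :=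
    ((isLittleO_const_log_atTop.isBigO.add (isBigO_refl log atTop)).pow n).trans_isLittleO
      isLittleO_pow_log_id_atTop
  refine IsBigO.trans_isLittleO ?_ (hlog.comp_tendsto tendsto_natCast_atTop_atTop)
  refine IsBigO.of_bound 1 (Eventually.of_forall fun k => ?_)
  have h0 : (0 : ℝ) ≤ harmonic k :=
    (log_nonneg (by simp)).trans (log_add_one_le_harmonic k)
  rw [one_mul, Function.comp_apply, norm_pow, norm_pow, Real.norm_of_nonneg h0]
  exact pow_le_pow_left₀ h0 ((harmonic_le_one_add_log k).trans (le_abs_self _)) n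

section Dominance

variable {u : ℕ → ℝ}

lemma isBigO_one_eval_comp (hu : Tendsto u atTop atTop) {r : ℝ[X]} (hr : r ≠ 0) :
    (fun _ => (1 : ℝ)) =O[atTop] (fun k => r.eval (u k)) := by
  have hdeg : (1 : ℝ[X]).degree ≤ r.degree := by
    rw [degree_one]
    exact zero_le_degree_iff.mpr hr
  have h := (isBigO_atTop_of_degree_le 1 r hdeg).comp_tendsto hu
  simp only [Function.comp_def, eval_one] at h
  exact h

variable (hu : Tendsto u atTop atTop)
  (hslow : ∀ n : ℕ, (fun k => u k ^ n) =o[atTop] (fun k => (k : ℝ)))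
include hu hslow

lemma isLittleO_eval_comp (r : ℝ[X]) :
    (fun k => r.eval (u k)) =o[atTop] (fun k => (k : ℝ)) := by
  have hdeg : r.degree ≤ (X ^ r.natDegree : ℝ[X]).degree := by
    rw [degree_X_pow]
    exact degree_le_natDegree
  exact ((isBigO_atTop_of_degree_le r _ hdeg).comp_tendsto hu).trans_isLittleO
    (by simpa [Function.comp_def] using hslow r.natDegree)

lemma isLittleO_evalEval_of_degree_lt {p : ℝ[X][Y]} {d : ℕ} (hp : p.degree < d) :
    (fun k => p.evalEval (u k) k) =o[atTop] (fun k => (k : ℝ) ^ d) := by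
  have hsum : (fun k => p.evalEval (u k) (k : ℝ)) =
      fun k => ∑ j ∈ p.support, (p.coeff j).eval (u k) * (k : ℝ) ^ j := by
    funext k
    rw [evalEval, eval_eq_sum (p := p), sum_def, eval_finsetSum]
    simp only [eval_mul, eval_pow, eval_C]
  rw [hsum]
  refine IsLittleO.fun_sum fun j hj => ?_
  have hjd : j + 1 ≤ d := by exact_mod_cast (le_degree_of_mem_supp j hj).trans_lt hp
  have hpow : (fun k : ℕ => (k : ℝ) ^ (j + 1)) =O[atTop] (fun k : ℕ => (k : ℝ) ^ d) :=
    (isBigO_pow_pow_cobounded_of_le hjd).comp_tendsto tendsto_natCast_atTop_cobounded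
  exact ((isLittleO_eval_comp hu hslow _).mul_isBigO
    (isBigO_refl (fun k : ℕ => (k : ℝ) ^ j) _)).trans_isBigO (by simpa [pow_succ'] using hpow)

lemma eventually_evalEval_ne_zero {p : ℝ[X][Y]} (hp : p ≠ 0) :
    ∀ᶠ k in atTop, p.evalEval (u k) k ≠ 0 := by
  have hlc : p.leadingCoeff ≠ 0 := leadingCoeff_ne_zero.mpr hp
  set main := fun k : ℕ => p.leadingCoeff.eval (u k) * (k : ℝ) ^ p.natDegree
  have hmain : ∀ᶠ k in atTop, main k ≠ 0 := by
    filter_upwards [hu.eventually (eventually_atTop_not_isRoot _ hlc), eventually_ge_atTop 1]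
      with k hroot hk
    exact mul_ne_zero hroot (pow_ne_zero _ (by positivity))
  have hrest : (fun k => p.eraseLead.evalEval (u k) k) =o[atTop] main := by
    refine (isLittleO_evalEval_of_degree_lt hu hslow (d := p.natDegree) ?_).trans_isBigO ?_
    · exact (degree_eraseLead_lt hp).trans_eq (degree_eq_natDegree hp)
    · simpa [main] using (isBigO_one_eval_comp hu hlc).mul
        (isBigO_refl (fun k : ℕ => (k : ℝ) ^ p.natDegree) _)
  have hsplit : (fun k => p.evalEval (u k) (k : ℝ)) =
      (fun k => p.eraseLead.evalEval (u k) k) + main := by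
    funext k
    calc p.evalEval (u k) k
        = (p.eraseLead + C p.leadingCoeff * X ^ p.natDegree).evalEval (u k) k := by
          rw [eraseLead_add_C_mul_X_pow]
      _ = _ := by
          rw [evalEval_add]
          simp [main, evalEval]
  have hequiv := hsplit ▸ hrest.add_isEquivalent IsEquivalent.refl
  filter_upwards [hmain, hequiv.isBigO_symm.eq_zero_imp] with k hk himp
  exact fun h => hk (himp h)

end Dominance


lemma eventually_evalEval_harmonic_ne_zero {K : Type*} [Field K] [CharZero K] {g : K[X][Y]}
    (hg : g ≠ 0) : ∀ᶠ k : ℕ in atTop, g.evalEval (k : K) (harmonic k : K) ≠ 0 := by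
  obtain ⟨ℓ, hℓ⟩ := exists_mapLinear_mapLinear_ne_zero hg
  have hswap : Bivariate.swap (mapLinear (mapLinear ℓ) g) ≠ 0 :=
    (map_ne_zero_iff _ Bivariate.swap.injective).mpr hℓ
  filter_upwards [eventually_evalEval_ne_zero tendsto_harmonic_atTop isLittleO_harmonic_pow hswap]
    with k hk hzero
  apply hk
  rw [← coe_aevalAeval_eq_evalEval, Bivariate.aevalAeval_swap, coe_aevalAeval_eq_evalEval]
  have := evalEval_mapLinear_mapLinear ℓ g k (harmonic k)
  simp only [eq_ratCast, Rat.cast_natCast] at this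
  rw [this, hzero, map_zero]

lemma Hnum_eq_harmonic (K : Type) [Field K] [CharZero K] (k : ℕ) : Hnum K k = harmonic k := by
  simp [Hnum, harmonic_eq_sum_Icc]

lemma eval₂_germ_evalRingHom {R : Type*} [CommSemiring R] (l : Filter ℕ) (g : R[X][Y])
    (H : ℕ → R) :
    eval₂ ((Germ.coeRingHom l).comp (RingHom.pi fun k : ℕ => evalRingHom (k : R)))
      (H : l.Germ R) g = ((fun k : ℕ => g.evalEval (k : R) (H k) : ℕ → R) : l.Germ R) := by
  rw [show (H : l.Germ R) = Germ.coeRingHom l H from rfl, ← hom_eval₂]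
  refine congrArg (fun f : ℕ → R => (f : l.Germ R)) (funext fun k => ?_)
  change Pi.evalRingHom _ k (eval₂ _ _ g) = _
  rw [hom_eval₂, ← eval₂_evalRingHom]
  rfl

/-- A ring homomorphism `τ : K(x)[h] → S(K)` (where `K(x)[h]` is realized as the
polynomial ring in `h` over `K(x)`) which on `K(x)` is the evaluation embedding
`p/q ↦ ⟨p(k)/q(k)⟩` and sends `h` to the germ of the harmonic numbers `⟨H_k⟩`
is injective. -/
theorem stmt18 (K : Type) [Field K] [CharZero K]
    (τ : Polynomial (RatFunc K) →+* SeqRing K)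
    (hrat : ∀ f : RatFunc K,
      τ (Polynomial.C f)
        = ((fun k : ℕ => RatFunc.eval (RingHom.id K) (k : K) f : ℕ → K) : SeqRing K))
    (hh : τ Polynomial.X = ((fun k : ℕ => Hnum K k : ℕ → K) : SeqRing K)) :
    Function.Injective τ := by
  refine (injective_iff_map_eq_zero τ).mpr fun f hf => ?_
  by_contra hf0
  set g := IsLocalization.integerNormalization (nonZeroDivisors K[X]) f
  have hg : g ≠ 0 := IsFractionRing.integerNormalization_eq_zero_iff.not.mpr hf0
  have hτ : (τ.comp C).comp (algebraMap K[X] (RatFunc K)) =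
      (Germ.coeRingHom atTop).comp (RingHom.pi fun k : ℕ => evalRingHom (k : K)) := by
    refine RingHom.ext fun p => ?_
    simp only [RingHom.comp_apply, hrat, RatFunc.eval_algebraMap, eval₂_id]
    rfl
  have hzero := IsLocalization.integerNormalization_eval₂_eq_zero (nonZeroDivisors K[X])
    (τ.comp C) f (x := τ X) (by rwa [← hom_eval₂, eval₂_C_X])
  rw [hτ, hh, eval₂_germ_evalRingHom, ← Germ.coe_zero, Germ.coe_eq] at hzero
  obtain ⟨k, hk, hk0⟩ := (hzero.and (eventually_evalEval_harmonic_ne_zero hg)).exists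
  exact hk0 (by simpa [Hnum_eq_harmonic] using hk)
end
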